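/- Let A be a Noetherian ring, R and R̃ flat A-algebras, and μ: R → R̃ an A-algebra homomorphism inducing an isomorphism R ⊗_A Q(A) ≅ R̃ ⊗_A Q(A). Then μ induces an isomorphism of total quotient rings Q(R) ≅ Q(R̃), and μ is birational (it induces a bijection between minimal primes of R and R̃ and isomorphisms of the corresponding localizations). -/

import Mathlib

/-!
Since `R` and `R̃` are flat over `A`, the non-zerodivisors of `A` stay non-zerodivisors in `R`
and `R̃`, so `R ⊗_A Q(A)` and `R̃ ⊗_A Q(A)` are localizations of `R` and `R̃` at submonoids of
non-zerodivisors. Through the isomorphism induced by `μ`, the single ring `S = R̃ ⊗_A Q(A)` is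
such a localization of both. A localization at non-zerodivisors does not change the total ring
of fractions, identifies minimal primes by contraction, and does not change the localizations
at primes it contracts to. Comparing `R` and `R̃` through `S` gives all three assertions.
-/

open IsLocalization TensorProduct

theorem Module.Flat.algebraMapSubmonoid_le_nonZeroDivisors {A R : Type*} [CommRing A]
    [CommRing R] [Algebra A R] [Module.Flat A R] :
    Algebra.algebraMapSubmonoid R (nonZeroDivisors A) ≤ nonZeroDivisors R := by
  rintro _ ⟨a, ha, rfl⟩
  have : IsSMulRegular R (algebraMap A R a) :=
    (isSMulRegular_algebraMap_iff R).2 (Module.Flat.isSMulRegular_of_nonZeroDivisors ha)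
  exact isRegular_iff_mem_nonZeroDivisors.mp ((Commute.isRegular_iff (Commute.all _)).mpr this)

theorem IsLocalization.minimalPrimes_eq_image_comap {R : Type*} [CommRing R] (M : Submonoid R)
    (S : Type*) [CommRing S] [Algebra R S] [IsLocalization M S] (hM : M ≤ nonZeroDivisors R) :
    minimalPrimes R = Ideal.comap (algebraMap R S) '' minimalPrimes S := by
  have := IsLocalization.minimalPrimes_comap M S ⊥
  rwa [Ideal.comap_bot_of_injective _ (IsLocalization.injective S hM)] at this

section CommonLocalization

variable {R Rt S : Type*} [CommRing R] [CommRing Rt] [CommRing S] [Algebra R S] [Algebra Rt S]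
  (M : Submonoid R) (N : Submonoid Rt) [IsLocalization M S] [IsLocalization N S]
  {f : R →+* Rt} (hf : (algebraMap Rt S).comp f = algebraMap R S)
include hf

theorem exists_ringEquiv_fractionRing_of_isLocalization (hM : M ≤ nonZeroDivisors R)
    (hN : N ≤ nonZeroDivisors Rt) :
    ∃ e : Localization (nonZeroDivisors R) ≃+* Localization (nonZeroDivisors Rt),
      (e : Localization (nonZeroDivisors R) →+* Localization (nonZeroDivisors Rt)).comp
          (algebraMap R (Localization (nonZeroDivisors R))) =
        (algebraMap Rt (Localization (nonZeroDivisors Rt))).comp f := by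
  let _ := localizationAlgebraOfSubmonoidLe S (Localization (nonZeroDivisors R)) M _ hM
  have := localization_isScalarTower_of_submonoid_le S (Localization (nonZeroDivisors R)) M _ hM
  have := IsFractionRing.isFractionRing_of_isLocalization M S (Localization (nonZeroDivisors R)) hM
  let _ := localizationAlgebraOfSubmonoidLe S (Localization (nonZeroDivisors Rt)) N _ hN
  have := localization_isScalarTower_of_submonoid_le S (Localization (nonZeroDivisors Rt)) N _ hN
  have := IsFractionRing.isFractionRing_of_isLocalization N S (Localization (nonZeroDivisors Rt)) hN
  let e := IsLocalization.algEquiv (nonZeroDivisors S) (Localization (nonZeroDivisors R))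
    (Localization (nonZeroDivisors Rt))
  refine ⟨e.toRingEquiv, RingHom.ext fun x => ?_⟩
  simp [IsScalarTower.algebraMap_apply R S (Localization (nonZeroDivisors R)),
    IsScalarTower.algebraMap_apply Rt S (Localization (nonZeroDivisors Rt)), ← hf]

theorem bijOn_comap_minimalPrimes_of_isLocalization (hM : M ≤ nonZeroDivisors R)
    (hN : N ≤ nonZeroDivisors Rt) :
    Set.BijOn (Ideal.comap f) (minimalPrimes Rt) (minimalPrimes R) := by
  have hcomap (Q : Ideal S) : (Q.comap (algebraMap Rt S)).comap f = Q.comap (algebraMap R S) := by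
    rw [Ideal.comap_comap, hf]
  rw [minimalPrimes_eq_image_comap M S hM, minimalPrimes_eq_image_comap N S hN]
  refine ⟨?_, ?_, ?_⟩
  · rintro _ ⟨Q, hQ, rfl⟩
    exact ⟨Q, hQ, (hcomap Q).symm⟩
  · rintro _ ⟨Q₁, -, rfl⟩ _ ⟨Q₂, -, rfl⟩ h
    rw [hcomap, hcomap] at h
    rw [(orderEmbedding M S).injective h]
  · rintro _ ⟨Q, hQ, rfl⟩
    exact ⟨_, ⟨Q, hQ, rfl⟩, hcomap Q⟩

include M N in
theorem localRingHom_comap_bijective_of_isLocalization (P : Ideal S) [P.IsPrime] :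
    Function.Bijective (Localization.localRingHom ((P.comap (algebraMap Rt S)).comap f)
      (P.comap (algebraMap Rt S)) f rfl) := by
  have := isLocalization_isLocalization_atPrime_isLocalization N (Localization.AtPrime P) P
  have : IsLocalization.AtPrime (Localization.AtPrime P)
      ((P.comap (algebraMap Rt S)).comap f) := by
    simp only [Ideal.comap_comap, hf]
    exact isLocalization_isLocalization_atPrime_isLocalization M (Localization.AtPrime P) P
  have hRt := IsLocalization.bijective (P.comap (algebraMap Rt S)).primeCompl
    (Localization.localRingHom _ P (algebraMap Rt S) rfl) (by
      ext
      simp [Localization.localRingHom_to_map,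
        IsScalarTower.algebraMap_apply Rt S (Localization.AtPrime P)])
  have hR := IsLocalization.bijective ((P.comap (algebraMap Rt S)).comap f).primeCompl
    ((Localization.localRingHom _ P (algebraMap Rt S) rfl).comp
      (Localization.localRingHom _ _ f rfl)) (by
      ext
      simp [Localization.localRingHom_to_map,
        IsScalarTower.algebraMap_apply R S (Localization.AtPrime P), ← hf])
  rw [RingHom.coe_comp] at hR
  exact (hRt.of_comp_iff' _).mp hR

end CommonLocalization

theorem stmt13_general (A R Rt : Type*) [CommRing A]
    [CommRing R] [CommRing Rt]
    [Algebra A R] [Algebra A Rt] [Module.Flat A R] [Module.Flat A Rt]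
    (μ : R →ₐ[A] Rt)
    (hbij : Function.Bijective
      (Algebra.TensorProduct.map μ (AlgHom.id A (Localization (nonZeroDivisors A))))) :
    (∃ e : Localization (nonZeroDivisors R) ≃+* Localization (nonZeroDivisors Rt),
      (e : Localization (nonZeroDivisors R) →+* Localization (nonZeroDivisors Rt)).comp
          (algebraMap R (Localization (nonZeroDivisors R))) =
        (algebraMap Rt (Localization (nonZeroDivisors Rt))).comp μ.toRingHom) ∧
    Set.BijOn (fun q => Ideal.comap μ.toRingHom q) (minimalPrimes Rt) (minimalPrimes R) ∧
    (∀ q : Ideal Rt, ∀ hq : q ∈ minimalPrimes Rt,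
      let _ : q.IsPrime := hq.1.1
      let _ : (Ideal.comap μ.toRingHom q).IsPrime := Ideal.IsPrime.comap _
      Function.Bijective
        (Localization.localRingHom (Ideal.comap μ.toRingHom q) q μ.toRingHom rfl)) := by
  let K := Localization (nonZeroDivisors A)
  let M := Algebra.algebraMapSubmonoid R (nonZeroDivisors A)
  let N := Algebra.algebraMapSubmonoid Rt (nonZeroDivisors A)
  let e := RingEquiv.ofBijective _ hbij
  let _ : Algebra R (Rt ⊗[A] K) := ((e : R ⊗[A] K →+* Rt ⊗[A] K).comp (algebraMap R _)).toAlgebra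
  have : IsLocalization M (Rt ⊗[A] K) := (isLocalization_iff_of_ringEquiv M e).mp inferInstance
  have hμ : (algebraMap Rt (Rt ⊗[A] K)).comp μ.toRingHom = algebraMap R (Rt ⊗[A] K) := by
    ext x
    exact (Algebra.TensorProduct.map_tmul μ (AlgHom.id A K) x 1).symm
  have hM : M ≤ nonZeroDivisors R := Module.Flat.algebraMapSubmonoid_le_nonZeroDivisors
  have hN : N ≤ nonZeroDivisors Rt := Module.Flat.algebraMapSubmonoid_le_nonZeroDivisors
  refine ⟨exists_ringEquiv_fractionRing_of_isLocalization M N hμ hM hN,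
    bijOn_comap_minimalPrimes_of_isLocalization M N hμ hM hN, fun q hq => ?_⟩
  obtain ⟨P, hP, rfl⟩ : q ∈ Ideal.comap (algebraMap Rt (Rt ⊗[A] K)) '' minimalPrimes (Rt ⊗[A] K) :=
    minimalPrimes_eq_image_comap N (Rt ⊗[A] K) hN ▸ hq
  have := hP.isPrime
  intro _ _
  exact localRingHom_comap_bijective_of_isLocalization M N hμ P

/-- Let `A` be Noetherian, `R`, `R̃` flat `A`-algebras and `μ : R → R̃` an `A`-algebra map
inducing an isomorphism `R ⊗_A Q(A) ≅ R̃ ⊗_A Q(A)`. Then `μ` induces an isomorphism of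
total quotient rings `Q(R) ≅ Q(R̃)`, and `μ` is birational: it induces a bijection between
the minimal primes of `R̃` and of `R` together with isomorphisms of the corresponding
localizations. -/
theorem stmt13 (A R Rt : Type*) [CommRing A] [IsNoetherianRing A]
    [CommRing R] [IsNoetherianRing R] [CommRing Rt] [IsNoetherianRing Rt]
    [Algebra A R] [Algebra A Rt] [Module.Flat A R] [Module.Flat A Rt]
    (μ : R →ₐ[A] Rt)
    (hbij : Function.Bijective
      (Algebra.TensorProduct.map μ (AlgHom.id A (Localization (nonZeroDivisors A))))) :
    (∃ e : Localization (nonZeroDivisors R) ≃+* Localization (nonZeroDivisors Rt),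
      (e : Localization (nonZeroDivisors R) →+* Localization (nonZeroDivisors Rt)).comp
          (algebraMap R (Localization (nonZeroDivisors R))) =
        (algebraMap Rt (Localization (nonZeroDivisors Rt))).comp μ.toRingHom) ∧
    Set.BijOn (fun q => Ideal.comap μ.toRingHom q) (minimalPrimes Rt) (minimalPrimes R) ∧
    (∀ q : Ideal Rt, ∀ hq : q ∈ minimalPrimes Rt,
      let _ : q.IsPrime := hq.1.1
      let _ : (Ideal.comap μ.toRingHom q).IsPrime := Ideal.IsPrime.comap _
      Function.Bijective
        (Localization.localRingHom (Ideal.comap μ.toRingHom q) q μ.toRingHom rfl)) :=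
  stmt13_general A R Rt μ hbij
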